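/- Let (x,y) ∈ ℂ² with |p'(x)| > 2|a| and a ≠ 0. If (ξ,η) ∈ ℂ² is a tangent vector and (ξ',η') = (p'(x)ξ + aη, aξ) is its image under the derivative of the Hénon map, then |ξ'| < |η'| implies |ξ| < |η|. -/

import Mathlib

/-! If `|ξ| ≥ |η|`, the reverse triangle inequality gives
`|ξ'| ≥ |p'(x)| |ξ| - |a| |η| ≥ (|p'(x)| - |a|) |ξ| ≥ |a| |ξ| = |η'|`, since `|p'(x)| > 2|a|`.
So the horizontal cone `|ξ| ≥ |η|` is mapped into the horizontal cone `|ξ'| ≥ |η'|`,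
and the statement is the contrapositive. -/

theorem norm_mul_le_norm_mul_add_mul {𝕜 : Type*} [NormedDivisionRing 𝕜] {c a ξ η : 𝕜}
    (hc : 2 * ‖a‖ < ‖c‖) (hηξ : ‖η‖ ≤ ‖ξ‖) : ‖a * ξ‖ ≤ ‖c * ξ + a * η‖ := by
  have hcξ : 2 * ‖a‖ * ‖ξ‖ ≤ ‖c‖ * ‖ξ‖ := by gcongr
  have haη : ‖a‖ * ‖η‖ ≤ ‖a‖ * ‖ξ‖ := by gcongr
  calc ‖a * ξ‖ = ‖a‖ * ‖ξ‖ := norm_mul a ξ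
    _ ≤ ‖c‖ * ‖ξ‖ - ‖a‖ * ‖η‖ := by linarith
    _ = ‖c * ξ‖ - ‖a * η‖ := by rw [norm_mul, norm_mul]
    _ ≤ ‖c * ξ + a * η‖ := norm_sub_le_norm_add _ _

theorem henon_vertical_cone_general (p : Polynomial ℂ) (a x ξ η ξ' η' : ℂ)
    (hx : 2 * ‖a‖ < ‖(Polynomial.derivative p).eval x‖)
    (hξ' : ξ' = (Polynomial.derivative p).eval x * ξ + a * η)
    (hη' : η' = a * ξ)
    (h : ‖ξ'‖ < ‖η'‖) : ‖ξ‖ < ‖η‖ := by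
  subst hξ' hη'
  by_contra! hηξ
  exact h.not_ge (norm_mul_le_norm_mul_add_mul hx hηξ)

/-- Vertical cone invariance (backward): if `|p'(x)| > 2|a|`, `a ≠ 0`, and
`(ξ',η') = (p'(x)ξ + aη, aξ)` satisfies `|ξ'| < |η'|`, then `|ξ| < |η|`. -/
theorem henon_vertical_cone (p : Polynomial ℂ) (a x ξ η ξ' η' : ℂ) (ha : a ≠ 0)
    (hx : 2 * ‖a‖ < ‖(Polynomial.derivative p).eval x‖)
    (hξ' : ξ' = (Polynomial.derivative p).eval x * ξ + a * η)
    (hη' : η' = a * ξ)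
    (h : ‖ξ'‖ < ‖η'‖) : ‖ξ‖ < ‖η‖ :=
  henon_vertical_cone_general p a x ξ η ξ' η' hx hξ' hη' h
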